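/- arXiv:1404.2847 — 8 statements merged into one kernel-verified Lean document; each statement's English description precedes it below -/
import Mathlib

section
/- A smooth vector field v on pseudo-Euclidean space E^n_ν (n > 1) satisfies ∇ₓ v = φ x for all vector fields x (for some smooth function φ) if and only if there exist a constant a ∈ ℝ and a constant vector b such that v = a r + b, where r is the dilatational (position) vector field; moreover φ is then the constant a. -/
/-- A smooth vector field `v` on pseudo-Euclidean space `ℝⁿ` (n > 1) satisfies
`∇ₓ v = φ x` for all `x` (i.e. `fderiv v = φ • id` pointwise) iff there exist a constant
`a ∈ ℝ` and a constant vector `b` with `v = a r + b` (where `r` is the position vector field);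
moreover `φ` is then the constant `a`. -/
theorem stmt_2 {n : ℕ} (hn : 1 < n)
    (v : (Fin n → ℝ) → (Fin n → ℝ)) (φ : (Fin n → ℝ) → ℝ)
    (hv : ContDiff ℝ (⊤ : ℕ∞) v) (hφ : ContDiff ℝ (⊤ : ℕ∞) φ) :
    (∀ p, fderiv ℝ v p = φ p • ContinuousLinearMap.id ℝ (Fin n → ℝ)) ↔
      ∃ (a : ℝ) (b : Fin n → ℝ), (∀ p, v p = a • p + b) ∧ (∀ p, φ p = a) := by
  constructor
  · intro H
    -- Step 1: fderiv φ = 0 everywhere, using symmetry of the second derivative.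
    have hφd : Differentiable ℝ φ := hφ.differentiable (by simp)
    have hvd : Differentiable ℝ v := hv.differentiable (by simp)
    have hker : ∀ x, fderiv ℝ φ x = 0 := by
      intro x
      set c := fderiv ℝ φ x with hc
      have hf' : ∀ y, HasFDerivAt v (φ y • ContinuousLinearMap.id ℝ (Fin n → ℝ)) y := by
        intro y
        have := (hvd y).hasFDerivAt
        rwa [H y] at this
      have hsnd : HasFDerivAt (fun y => φ y • ContinuousLinearMap.id ℝ (Fin n → ℝ))
          (c.smulRight (ContinuousLinearMap.id ℝ (Fin n → ℝ))) x :=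
        (hφd x).hasFDerivAt.smul_const (ContinuousLinearMap.id ℝ (Fin n → ℝ))
      have hsymm := second_derivative_symmetric hf' hsnd
      -- hsymm : ∀ u w, (c u) • w = (c w) • u
      have hbasis : ∀ i : Fin n, c (Pi.single i 1) = 0 := by
        intro i
        obtain ⟨j, hji⟩ : ∃ j : Fin n, j ≠ i := by
          rcases eq_or_ne i ⟨0, by omega⟩ with h | h
          · exact ⟨⟨1, by omega⟩, by simp [h, Fin.ext_iff]⟩
          · exact ⟨⟨0, by omega⟩, fun hh => h hh.symm⟩
        have := hsymm (Pi.single i 1) (Pi.single j 1)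
        have := congrFun this j
        simpa [ContinuousLinearMap.smulRight_apply, Pi.single_apply, hji,
          Ne.symm hji] using this
      ext u
      have hu : u = ∑ i : Fin n, (u i) • (Pi.single i 1 : Fin n → ℝ) := by
        ext j
        simp [Pi.single_apply]
      rw [hu]
      simp [map_sum, hbasis]
    -- Step 2: φ is constant.
    have hφconst : ∀ p, φ p = φ 0 := fun p =>
      is_const_of_fderiv_eq_zero hφd hker p 0
    set a := φ 0 with ha
    -- Step 3: v - a • id has zero derivative, hence is constant.
    refine ⟨a, v 0, ?_, hφconst⟩
    intro p
    set w : (Fin n → ℝ) → (Fin n → ℝ) := fun q => v q - (a : ℝ) • q with hw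
    have hwd : ∀ q, HasFDerivAt w (0 : (Fin n → ℝ) →L[ℝ] (Fin n → ℝ)) q := by
      intro q
      have h1 : HasFDerivAt v (φ q • ContinuousLinearMap.id ℝ (Fin n → ℝ)) q := by
        have := (hvd q).hasFDerivAt
        rwa [H q] at this
      have h2 : HasFDerivAt (fun q : Fin n → ℝ => a • q)
          (a • ContinuousLinearMap.id ℝ (Fin n → ℝ)) q :=
        (hasFDerivAt_id q).const_smul a
      have := h1.sub h2
      rw [hφconst q, sub_self] at this
      exact this
    have hwc : w p = w 0 := by
      have hdiff : Differentiable ℝ w := fun q => (hwd q).differentiableAt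
      have hzero : ∀ q, fderiv ℝ w q = 0 := fun q => (hwd q).fderiv
      exact is_const_of_fderiv_eq_zero hdiff hzero p 0
    have : v p - a • p = v 0 - a • (0 : Fin n → ℝ) := hwc
    rw [smul_zero, sub_zero] at this
    linear_combination (norm := abel) this
  · rintro ⟨a, b, hvab, hφa⟩
    intro p
    have hveq : v = fun q => a • q + b := funext hvab
    have : HasFDerivAt (fun q : Fin n → ℝ => a • q + b)
        (a • ContinuousLinearMap.id ℝ (Fin n → ℝ)) p :=
      ((hasFDerivAt_id p).const_smul a).add_const b
    rw [hveq, this.fderiv, hφa]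
end

section
/- Let p(z) = ∏ᵢ(z − λᵢ) − Σᵢ εᵢ(xⁱ)² ∏_{j≠i}(z − λⱼ) with ε₁ = ⋯ = εₙ = 1 and λ₁ < λ₂ < ⋯ < λₙ real. If all xⁱ ≠ 0, then p has n distinct real roots u¹ < u² < ⋯ < uⁿ interlacing the λᵢ: λ₁ < u¹ < λ₂ < u² < ⋯ < λₙ < uⁿ. -/
open Polynomial Finset

namespace Stmt4Aux

variable {n : ℕ}

noncomputable def P (lam x : Fin n → ℝ) : Polynomial ℝ :=
  (∏ j, (X - C (lam j))) - ∑ j, C ((x j) ^ 2) * ∏ m ∈ Finset.univ.erase j, (X - C (lam m))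

lemma eval_P (lam x : Fin n → ℝ) (z : ℝ) :
    (P lam x).eval z =
      (∏ j, (z - lam j)) - ∑ j, (x j) ^ 2 * ∏ m ∈ Finset.univ.erase j, (z - lam m) := by
  simp [P, eval_prod, eval_finset_sum, eval_prod]

lemma degree_A (lam : Fin n → ℝ) : (∏ j : Fin n, (X - C (lam j))).degree = (n : WithBot ℕ) := by
  rw [degree_prod]
  simp [degree_X_sub_C]

lemma degree_B_lt (lam x : Fin n → ℝ) (hn : 0 < n) :
    (∑ j, C ((x j) ^ 2) * ∏ m ∈ Finset.univ.erase j, (X - C (lam m))).degree < n := by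
  apply lt_of_le_of_lt (degree_sum_le _ _)
  rw [Finset.sup_lt_iff (by exact_mod_cast WithBot.bot_lt_coe n)]
  intro j _
  calc (C ((x j) ^ 2) * ∏ m ∈ Finset.univ.erase j, (X - C (lam m))).degree
      ≤ (C ((x j) ^ 2)).degree + (∏ m ∈ Finset.univ.erase j, (X - C (lam m))).degree :=
        degree_mul_le _ _
    _ ≤ 0 + (n - 1 : ℕ) := by
        apply add_le_add degree_C_le
        rw [degree_prod]
        simp [degree_X_sub_C, Finset.card_erase_of_mem]
    _ < n := by
        rw [zero_add]
        exact_mod_cast Nat.sub_lt hn one_pos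

lemma monic_P (lam x : Fin n → ℝ) (hn : 0 < n) : (P lam x).Monic := by
  have hA : (∏ j : Fin n, (X - C (lam j))).Monic :=
    monic_prod_of_monic _ _ fun j _ => monic_X_sub_C _
  have : (P lam x) = (∏ j : Fin n, (X - C (lam j))) +
      -(∑ j, C ((x j) ^ 2) * ∏ m ∈ Finset.univ.erase j, (X - C (lam m))) := by
    rw [P, sub_eq_add_neg]
  rw [this]
  apply hA.add_of_left
  rw [degree_neg, degree_A]
  exact degree_B_lt lam x hn

lemma degree_P (lam x : Fin n → ℝ) (hn : 0 < n) : (P lam x).degree = n := by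
  rw [P, sub_eq_add_neg, degree_add_eq_left_of_degree_lt, degree_A]
  rw [degree_neg, degree_A]
  exact degree_B_lt lam x hn

lemma natDegree_P (lam x : Fin n → ℝ) (hn : 0 < n) : (P lam x).natDegree = n :=
  natDegree_eq_of_degree_eq_some (degree_P lam x hn)

lemma eval_at_lam (lam x : Fin n → ℝ) (i : Fin n) :
    (P lam x).eval (lam i) =
      -((x i) ^ 2 * ∏ m ∈ Finset.univ.erase i, (lam i - lam m)) := by
  rw [eval_P]
  have h1 : (∏ j, (lam i - lam j)) = 0 :=
    Finset.prod_eq_zero (Finset.mem_univ i) (sub_self _)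
  have h2 : (∑ j, (x j) ^ 2 * ∏ m ∈ Finset.univ.erase j, (lam i - lam m))
      = (x i) ^ 2 * ∏ m ∈ Finset.univ.erase i, (lam i - lam m) := by
    apply Finset.sum_eq_single
    · intro j _ hji
      have : (∏ m ∈ Finset.univ.erase j, (lam i - lam m)) = 0 :=
        Finset.prod_eq_zero (Finset.mem_erase.2 ⟨Ne.symm hji, Finset.mem_univ i⟩) (sub_self _)
      rw [this, mul_zero]
    · intro h; exact absurd (Finset.mem_univ i) h
  rw [h1, h2, zero_sub]

end Stmt4Aux

namespace Stmt4Aux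

lemma c_ne_zero {lam : Fin n → ℝ} (hlam : StrictMono lam) (i : Fin n) :
    (∏ m ∈ Finset.univ.erase i, (lam i - lam m)) ≠ 0 :=
  Finset.prod_ne_zero_iff.2 fun m hm =>
    sub_ne_zero.2 fun h => (Finset.mem_erase.1 hm).1 (hlam.injective h).symm

lemma c_top_pos {lam : Fin n → ℝ} (hlam : StrictMono lam) (i : Fin n)
    (hi : ∀ j, j ≤ i) : 0 < ∏ m ∈ Finset.univ.erase i, (lam i - lam m) := by
  apply Finset.prod_pos
  intro m hm
  have hmi : m ≠ i := (Finset.mem_erase.1 hm).1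
  exact sub_pos.2 (hlam (lt_of_le_of_ne (hi m) hmi))

lemma c_adj_neg {lam : Fin n → ℝ} (hlam : StrictMono lam) (i i' : Fin n)
    (hii' : i.val + 1 = i'.val) :
    (∏ m ∈ Finset.univ.erase i, (lam i - lam m)) *
      (∏ m ∈ Finset.univ.erase i', (lam i' - lam m)) < 0 := by
  have hne : i' ≠ i := by rw [Fin.ne_iff_vne]; omega
  have hne' : i ≠ i' := hne.symm
  have h1 : i' ∈ Finset.univ.erase i := Finset.mem_erase.2 ⟨hne, Finset.mem_univ _⟩
  have h2 : i ∈ Finset.univ.erase i' := Finset.mem_erase.2 ⟨hne', Finset.mem_univ _⟩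
  rw [← Finset.mul_prod_erase _ _ h1, ← Finset.mul_prod_erase _ _ h2,
    Finset.erase_right_comm]
  have key : (lam i - lam i') * (∏ m ∈ (Finset.univ.erase i').erase i, (lam i - lam m)) *
      ((lam i' - lam i) * ∏ m ∈ (Finset.univ.erase i').erase i, (lam i' - lam m))
      = ((lam i - lam i') * (lam i' - lam i)) *
        ∏ m ∈ (Finset.univ.erase i').erase i, ((lam i - lam m) * (lam i' - lam m)) := by
    rw [Finset.prod_mul_distrib]; ring
  rw [key]
  have hii : i < i' := by rw [Fin.lt_iff_val_lt_val]; omega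
  have hprod : 0 < ∏ m ∈ (Finset.univ.erase i').erase i, ((lam i - lam m) * (lam i' - lam m)) := by
    apply Finset.prod_pos
    intro m hm
    have hmi : m ≠ i := (Finset.mem_erase.1 hm).1
    have hmi' : m ≠ i' := (Finset.mem_erase.1 (Finset.mem_of_mem_erase hm)).1
    have : m.val < i.val ∨ i'.val < m.val := by
      have := Fin.val_ne_of_ne hmi
      have := Fin.val_ne_of_ne hmi'
      omega
    rcases this with h | h
    · have hmlt : m < i := by rwa [Fin.lt_iff_val_lt_val]
      exact mul_pos (sub_pos.2 (hlam hmlt)) (sub_pos.2 (hlam (hmlt.trans hii)))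
    · have hmlt : i' < m := by rwa [Fin.lt_iff_val_lt_val]
      exact mul_pos_of_neg_of_neg (sub_neg.2 (hlam (hii.trans hmlt))) (sub_neg.2 (hlam hmlt))
  have hd : (lam i - lam i') * (lam i' - lam i) < 0 :=
    mul_neg_of_neg_of_pos (sub_neg.2 (hlam hii)) (sub_pos.2 (hlam hii))
  exact mul_neg_of_neg_of_pos hd hprod

lemma exists_root_Ioo (f : ℝ → ℝ) (hf : Continuous f) {a b : ℝ} (hab : a < b)
    (h : f a * f b < 0) : ∃ r ∈ Set.Ioo a b, f r = 0 := by
  rcases mul_neg_iff.1 h with ⟨ha, hb⟩ | ⟨ha, hb⟩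
  · obtain ⟨r, hr, hr0⟩ := intermediate_value_Ioo' hab.le hf.continuousOn
      (Set.mem_Ioo.2 ⟨hb, ha⟩)
    exact ⟨r, hr, hr0⟩
  · obtain ⟨r, hr, hr0⟩ := intermediate_value_Ioo hab.le hf.continuousOn
      (Set.mem_Ioo.2 ⟨ha, hb⟩)
    exact ⟨r, hr, hr0⟩

end Stmt4Aux

/-- Interlacing of the roots of the elliptic-coordinate characteristic polynomial
`p(z) = ∏ᵢ(z − λᵢ) − Σᵢ (xⁱ)² ∏_{j≠i}(z − λⱼ)` (Euclidean case, all εᵢ = 1):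
if `λ₁ < ⋯ < λₙ` and all `xⁱ ≠ 0`, then `p` has `n` distinct real roots
`u¹ < ⋯ < uⁿ` with `λ₁ < u¹ < λ₂ < u² < ⋯ < λₙ < uⁿ`, and these are all the roots. -/
theorem stmt_4 {n : ℕ} (hn : 0 < n) (lam x : Fin n → ℝ)
    (hlam : StrictMono lam) (hx : ∀ i, x i ≠ 0) :
    ∃ u : Fin n → ℝ, StrictMono u ∧
      (∀ i, (∏ j, (u i - lam j))
        - ∑ j, (x j) ^ 2 * ∏ m ∈ Finset.univ.erase j, (u i - lam m) = 0) ∧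
      (∀ i, lam i < u i) ∧
      (∀ i j, i < j → u i < lam j) ∧
      (∀ z : ℝ,
        (∏ j, (z - lam j)) - ∑ j, (x j) ^ 2 * ∏ m ∈ Finset.univ.erase j, (z - lam m) = 0
          → ∃ i, z = u i) := by
  classical
  set f : ℝ → ℝ := fun z => (Stmt4Aux.P lam x).eval z with hf
  have hcont : Continuous f := (Stmt4Aux.P lam x).continuous
  -- key existence claim
  have key : ∀ i : Fin n, ∃ r, f r = 0 ∧ lam i < r ∧ ∀ j : Fin n, i < j → r < lam j := by
    intro i
    by_cases h : i.val + 1 < n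
    · set i' : Fin n := ⟨i.val + 1, h⟩ with hi'
      have hii : i < i' := by rw [Fin.lt_iff_val_lt_val]; simp [hi']
      have hsign : f (lam i) * f (lam i') < 0 := by
        rw [hf]
        simp only
        rw [Stmt4Aux.eval_at_lam, Stmt4Aux.eval_at_lam]
        have hc := Stmt4Aux.c_adj_neg hlam i i' rfl
        have hx2 : 0 < (x i) ^ 2 * (x i') ^ 2 := by
          have := hx i; have := hx i'; positivity
        calc -((x i) ^ 2 * ∏ m ∈ Finset.univ.erase i, (lam i - lam m)) *
              -((x i') ^ 2 * ∏ m ∈ Finset.univ.erase i', (lam i' - lam m))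
            = ((x i) ^ 2 * (x i') ^ 2) *
              ((∏ m ∈ Finset.univ.erase i, (lam i - lam m)) *
               (∏ m ∈ Finset.univ.erase i', (lam i' - lam m))) := by ring
          _ < 0 := mul_neg_of_pos_of_neg hx2 hc
      obtain ⟨r, hr, hr0⟩ := Stmt4Aux.exists_root_Ioo f hcont (hlam hii) hsign
      refine ⟨r, hr0, hr.1, fun j hij => lt_of_lt_of_le hr.2 ?_⟩
      exact hlam.monotone (by rw [Fin.le_def]; have := Fin.lt_iff_val_lt_val.1 hij; simp [hi']; omega)
    · -- i is the top index
      have htop : ∀ j : Fin n, j ≤ i := by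
        intro j; rw [Fin.le_def]; have := j.isLt; omega
      have hfi : f (lam i) < 0 := by
        rw [hf]; simp only
        rw [Stmt4Aux.eval_at_lam]
        have hc := Stmt4Aux.c_top_pos hlam i htop
        have hx2 : 0 < (x i) ^ 2 := by have := hx i; positivity
        have := mul_pos hx2 hc
        linarith
      -- find M with f M > 0 and lam i < M
      have htend : Filter.Tendsto f Filter.atTop Filter.atTop := by
        apply Polynomial.tendsto_atTop_of_leadingCoeff_nonneg
        · rw [Stmt4Aux.degree_P lam x hn]; exact_mod_cast hn
        · rw [(Stmt4Aux.monic_P lam x hn).leadingCoeff]; norm_num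
      obtain ⟨M, hM0, hMi⟩ :=
        ((htend.eventually_gt_atTop 0).and (Filter.eventually_gt_atTop (lam i))).exists
      have hsign : f (lam i) * f M < 0 := mul_neg_of_neg_of_pos hfi hM0
      obtain ⟨r, hr, hr0⟩ := Stmt4Aux.exists_root_Ioo f hcont hMi hsign
      exact ⟨r, hr0, hr.1, fun j hij => absurd hij (not_lt.2 (htop j))⟩
  choose u hu0 hu1 hu2 using key
  have humono : StrictMono u := by
    intro i j hij
    exact lt_trans (lt_of_lt_of_le (hu2 i j hij) le_rfl) (hu1 j)
  refine ⟨u, humono, ?_, hu1, hu2, ?_⟩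
  · intro i
    have := hu0 i
    simp only [hf] at this
    rwa [Stmt4Aux.eval_P] at this
  · intro z hz
    by_contra hcon
    push_neg at hcon
    have hzr : (Stmt4Aux.P lam x).eval z = 0 := by rw [Stmt4Aux.eval_P]; exact hz
    have hPne : Stmt4Aux.P lam x ≠ 0 := (Stmt4Aux.monic_P lam x hn).ne_zero
    have hsub : insert z (Finset.image u Finset.univ) ⊆ (Stmt4Aux.P lam x).roots.toFinset := by
      intro w hw
      rw [Multiset.mem_toFinset, Polynomial.mem_roots hPne]
      rcases Finset.mem_insert.1 hw with rfl | hw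
      · exact hzr
      · obtain ⟨i, _, rfl⟩ := Finset.mem_image.1 hw
        exact hu0 i
    have hcard : (insert z (Finset.image u Finset.univ)).card = n + 1 := by
      rw [Finset.card_insert_of_notMem, Finset.card_image_of_injective _ humono.injective,
        Finset.card_univ, Fintype.card_fin]
      intro hmem
      obtain ⟨i, _, hi⟩ := Finset.mem_image.1 hmem
      exact hcon i hi.symm
    have h1 := Finset.card_le_card hsub
    have h2 := Multiset.toFinset_card_le (Stmt4Aux.P lam x).roots
    have h3 := Polynomial.card_roots' (Stmt4Aux.P lam x)
    rw [Stmt4Aux.natDegree_P lam x hn] at h3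
    omega
end

section
/- Let L = A + r ⊗ r^♭ be a central concircular tensor on E^n_ν and suppose E^n_ν = U ⊥ U^⊥ with U a nondegenerate A-invariant subspace. Writing r = r_U + r_{U⊥}, L_U := A|_U + r_U ⊗ r_U^♭, L_{U⊥} := A|_{U⊥} + r_{U⊥} ⊗ r_{U⊥}^♭, then det L = det L_U · det A|_{U⊥} + det A|_U · (det L_{U⊥} − det A|_{U⊥}). -/
open Matrix Polynomial

section aux

variable {R S : Type*} [CommRing R] [CommRing S]

lemma map_vecMulVec {n p : Type*} (f : R →+* S) (u : n → R) (v : p → R) :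
    (vecMulVec u v).map f = vecMulVec (f ∘ u) (f ∘ v) := by
  ext i j; simp [vecMulVec_apply]

/-- Matrix determinant lemma for invertible `A`. -/
lemma det_add_vecMulVec_of_invertible {K : Type*} [Field K] {n : Type*} [Fintype n]
    [DecidableEq n] (A : Matrix n n K) [Invertible A] (u v : n → K) :
    (A + vecMulVec u v).det = A.det * (1 + v ⬝ᵥ (A⁻¹ *ᵥ u)) := by
  rw [vecMulVec_eq (Fin 1), det_add_replicateCol_mul_replicateRow (isUnit_det_of_invertible A)]
  congr 1
  simp only [det_unique]
  simp only [Matrix.add_apply, Matrix.one_apply_eq, Matrix.mul_apply, Matrix.mulVec, dotProduct,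
    Matrix.replicateRow_apply, Matrix.replicateCol_apply, Finset.mul_sum, Finset.sum_mul]
  rw [Finset.sum_comm]
  congr 1
  refine Finset.sum_congr rfl fun i _ => Finset.sum_congr rfl fun j _ => by ring

end aux

lemma key_field {m k : ℕ} {K : Type*} [Field K]
    (A₁ : Matrix (Fin m) (Fin m) K) (A₂ : Matrix (Fin k) (Fin k) K)
    (h₁ : IsUnit A₁.det) (h₂ : IsUnit A₂.det)
    (r₁ w₁ : Fin m → K) (r₂ w₂ : Fin k → K) :
    (Matrix.fromBlocks (A₁ + vecMulVec r₁ w₁) (vecMulVec r₁ w₂)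
        (vecMulVec r₂ w₁) (A₂ + vecMulVec r₂ w₂)).det
      = (A₁ + vecMulVec r₁ w₁).det * A₂.det
        + A₁.det * ((A₂ + vecMulVec r₂ w₂).det - A₂.det) := by
  letI := A₁.invertibleOfIsUnitDet h₁
  letI := A₂.invertibleOfIsUnitDet h₂
  letI : Invertible (fromBlocks A₁ 0 0 A₂) := fromBlocksZero₂₁Invertible A₁ 0 A₂
  have hM : fromBlocks (A₁ + vecMulVec r₁ w₁) (vecMulVec r₁ w₂)
        (vecMulVec r₂ w₁) (A₂ + vecMulVec r₂ w₂)
      = fromBlocks A₁ 0 0 A₂ + vecMulVec (Sum.elim r₁ r₂) (Sum.elim w₁ w₂) := by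
    ext (i | i) (j | j) <;> simp [vecMulVec_apply]
  have hDinv : (fromBlocks A₁ 0 0 A₂)⁻¹ = fromBlocks A₁⁻¹ 0 0 A₂⁻¹ := by
    rw [← invOf_eq_nonsing_inv, invOf_fromBlocks_zero₂₁_eq, ← invOf_eq_nonsing_inv,
      ← invOf_eq_nonsing_inv]
    simp
  rw [hM, det_add_vecMulVec_of_invertible, det_add_vecMulVec_of_invertible,
    det_add_vecMulVec_of_invertible, hDinv, det_fromBlocks_zero₂₁, fromBlocks_mulVec,
    Matrix.zero_mulVec, Matrix.zero_mulVec, add_zero, zero_add, sumElim_dotProduct_sumElim]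
  simp only [Sum.elim_comp_inl, Sum.elim_comp_inr]
  ring

lemma map_lhs {m k : ℕ} {R S : Type*} [CommRing R] [CommRing S] (f : R →+* S)
    (A₁ : Matrix (Fin m) (Fin m) R) (A₂ : Matrix (Fin k) (Fin k) R)
    (r₁ w₁ : Fin m → R) (r₂ w₂ : Fin k → R) :
    f ((Matrix.fromBlocks (A₁ + vecMulVec r₁ w₁) (vecMulVec r₁ w₂)
        (vecMulVec r₂ w₁) (A₂ + vecMulVec r₂ w₂)).det)
      = (Matrix.fromBlocks (A₁.map f + vecMulVec (f ∘ r₁) (f ∘ w₁))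
          (vecMulVec (f ∘ r₁) (f ∘ w₂)) (vecMulVec (f ∘ r₂) (f ∘ w₁))
          (A₂.map f + vecMulVec (f ∘ r₂) (f ∘ w₂))).det := by
  rw [RingHom.map_det]
  congr 1
  ext (i | i) (j | j) <;> simp [vecMulVec_apply]

lemma map_single {R S : Type*} [CommRing R] [CommRing S] (f : R →+* S) {n : ℕ}
    (A : Matrix (Fin n) (Fin n) R) (r w : Fin n → R) :
    f ((A + vecMulVec r w).det) = (A.map f + vecMulVec (f ∘ r) (f ∘ w)).det := by
  rw [RingHom.map_det]
  congr 1
  ext i j; simp [vecMulVec_apply]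

lemma map_rhs {m k : ℕ} {R S : Type*} [CommRing R] [CommRing S] (f : R →+* S)
    (A₁ : Matrix (Fin m) (Fin m) R) (A₂ : Matrix (Fin k) (Fin k) R)
    (r₁ w₁ : Fin m → R) (r₂ w₂ : Fin k → R) :
    f ((A₁ + vecMulVec r₁ w₁).det * A₂.det
        + A₁.det * ((A₂ + vecMulVec r₂ w₂).det - A₂.det))
      = (A₁.map f + vecMulVec (f ∘ r₁) (f ∘ w₁)).det * (A₂.map f).det
        + (A₁.map f).det * ((A₂.map f + vecMulVec (f ∘ r₂) (f ∘ w₂)).det - (A₂.map f).det) := by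
  rw [map_add, _root_.map_mul, _root_.map_mul, map_sub, _root_.map_single, _root_.map_single, RingHom.map_det,
    RingHom.map_det]
  rfl

lemma key_real {m k : ℕ} (A₁ : Matrix (Fin m) (Fin m) ℝ) (A₂ : Matrix (Fin k) (Fin k) ℝ)
    (r₁ w₁ : Fin m → ℝ) (r₂ w₂ : Fin k → ℝ) :
    (Matrix.fromBlocks (A₁ + vecMulVec r₁ w₁) (vecMulVec r₁ w₂)
        (vecMulVec r₂ w₁) (A₂ + vecMulVec r₂ w₂)).det
      = (A₁ + vecMulVec r₁ w₁).det * A₂.det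
        + A₁.det * ((A₂ + vecMulVec r₂ w₂).det - A₂.det) := by
  let f : ℝ[X] →+* RatFunc ℝ := algebraMap ℝ[X] (RatFunc ℝ)
  have hf : Function.Injective f := IsFractionRing.injective ℝ[X] (RatFunc ℝ)
  set B₁ : Matrix (Fin m) (Fin m) ℝ[X] := (X : ℝ[X]) • 1 + A₁.map (C : ℝ → ℝ[X]) with hB₁def
  set B₂ : Matrix (Fin k) (Fin k) ℝ[X] := (X : ℝ[X]) • 1 + A₂.map (C : ℝ → ℝ[X]) with hB₂def
  have hchar : ∀ {n : ℕ} (A : Matrix (Fin n) (Fin n) ℝ),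
      ((X : ℝ[X]) • (1 : Matrix (Fin n) (Fin n) ℝ[X]) + A.map (C : ℝ → ℝ[X])).det ≠ 0 := by
    intro n A
    have h1 : (X : ℝ[X]) • (1 : Matrix (Fin n) (Fin n) ℝ[X]) + A.map (C : ℝ → ℝ[X]) = charmatrix (-A) := by
      ext i j
      by_cases h : i = j <;>
        simp [charmatrix_apply, Matrix.one_apply, Matrix.diagonal, h]
    rw [h1]
    exact (Matrix.charpoly_monic (-A)).ne_zero
  have hu : ∀ {n : ℕ} (B : Matrix (Fin n) (Fin n) ℝ[X]), B.det ≠ 0 →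
      IsUnit ((B.map f).det) := by
    intro n B hB
    rw [← RingHom.mapMatrix_apply, ← RingHom.map_det, isUnit_iff_ne_zero]
    exact fun h => hB (hf (h.trans (map_zero f).symm))
  have key := key_field (B₁.map f) (B₂.map f) (hu B₁ (hchar A₁)) (hu B₂ (hchar A₂))
    (f ∘ ((C : ℝ → ℝ[X]) ∘ r₁)) (f ∘ ((C : ℝ → ℝ[X]) ∘ w₁)) (f ∘ ((C : ℝ → ℝ[X]) ∘ r₂)) (f ∘ ((C : ℝ → ℝ[X]) ∘ w₂))
  rw [← map_lhs, ← map_rhs] at key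
  have keyR := hf key
  have keyE := congrArg (Polynomial.evalRingHom (0 : ℝ)) keyR
  rw [map_lhs, map_rhs] at keyE
  have hBe : ∀ {n : ℕ} (A : Matrix (Fin n) (Fin n) ℝ),
      (((X : ℝ[X]) • (1 : Matrix (Fin n) (Fin n) ℝ[X]) + A.map (C : ℝ → ℝ[X])).map (Polynomial.evalRingHom 0)) = A := by
    intro n A
    ext i j
    by_cases h : i = j <;> simp [Matrix.one_apply, h]
  have hre : ∀ {n : ℕ} (r : Fin n → ℝ), (Polynomial.evalRingHom (0:ℝ)) ∘ ((C : ℝ → ℝ[X]) ∘ r) = r := by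
    intro n r; funext i; simp
  rw [hB₁def, hB₂def, hBe, hBe, hre, hre, hre, hre] at keyE
  exact keyE

/-- Determinant splitting of a central concircular tensor `L = A + r ⊗ r^♭` over an
orthogonal decomposition `E = U ⊥ U^⊥` with `A` block-diagonal (`A₁` on `U`, `A₂` on `U^⊥`)
and block-diagonal metric (`G₁`, `G₂`): writing `r = r₁ + r₂` and the flats `w₁ = G₁ r₁`,
`w₂ = G₂ r₂`, the full operator is the block matrix below and
`det L = det L_U · det A|_{U^⊥} + det A|_U · (det L_{U^⊥} − det A|_{U^⊥})`. -/
theorem stmt_6 {m k : ℕ}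
    (A₁ G₁ : Matrix (Fin m) (Fin m) ℝ) (A₂ G₂ : Matrix (Fin k) (Fin k) ℝ)
    (hG₁ : G₁.IsSymm) (hG₂ : G₂.IsSymm)
    (hG₁nd : IsUnit G₁.det) (hG₂nd : IsUnit G₂.det)
    (r₁ : Fin m → ℝ) (r₂ : Fin k → ℝ) :
    (Matrix.fromBlocks
        (A₁ + Matrix.vecMulVec r₁ (G₁.mulVec r₁)) (Matrix.vecMulVec r₁ (G₂.mulVec r₂))
        (Matrix.vecMulVec r₂ (G₁.mulVec r₁)) (A₂ + Matrix.vecMulVec r₂ (G₂.mulVec r₂))).det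
      = (A₁ + Matrix.vecMulVec r₁ (G₁.mulVec r₁)).det * A₂.det
        + A₁.det * ((A₂ + Matrix.vecMulVec r₂ (G₂.mulVec r₂)).det - A₂.det) :=
  key_real A₁ A₂ r₁ (G₁.mulVec r₁) r₂ (G₂.mulVec r₂)
end

section
/- Let p(z,x) be the characteristic polynomial of the central concircular tensor L = A + r ⊗ r^♭ with parameter matrix A = J_k(0)^T (a single nilpotent Jordan block) and metric g = ε S_k (skew-diagonal). Then p(z) = z^k − ε Σ_{l=0}^{k−1} ( Σ_{i=1}^{l+1} x^i x^{l+2−i} ) z^l, and L has no constant eigenvalues: there is no λ ∈ ℝ such that p(λ, x) = 0 for all x in a nonempty open subset of ℝᵏ. -/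
open Matrix Finset

noncomputable def Cmat (k : ℕ) (z : ℝ) : Matrix (Fin k) (Fin k) ℝ :=
  Matrix.of fun i j : Fin k => if (j:ℕ) ≤ (i:ℕ) then z⁻¹ ^ ((i:ℕ) - (j:ℕ) + 1) else 0

lemma mulC (k : ℕ) (z : ℝ) (hz : z ≠ 0) :
    (z • (1 : Matrix (Fin k) (Fin k) ℝ)
      - Matrix.of (fun i j : Fin k => if (i : ℕ) = (j : ℕ) + 1 then (1 : ℝ) else 0))
      * Cmat k z = 1 := by
  ext i j
  simp only [Matrix.mul_apply, Matrix.sub_apply, Matrix.smul_apply, Matrix.one_apply,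
    Matrix.of_apply, smul_eq_mul, sub_mul, mul_ite, mul_one, mul_zero, ite_mul, zero_mul,
    one_mul, Cmat]
  have key : ∀ x : Fin k,
      (if (j:ℕ) ≤ (x:ℕ) then
          (if i = x then z * z⁻¹ ^ ((x:ℕ) - (j:ℕ) + 1) else 0)
            - (if (i:ℕ) = (x:ℕ) + 1 then z⁻¹ ^ ((x:ℕ) - (j:ℕ) + 1) else 0)
        else 0)
      = (if i = x then (if (j:ℕ) ≤ (x:ℕ) then z * z⁻¹ ^ ((x:ℕ) - (j:ℕ) + 1) else 0) else 0)
        - (if (i:ℕ) = (x:ℕ) + 1 then (if (j:ℕ) ≤ (x:ℕ) then z⁻¹ ^ ((x:ℕ) - (j:ℕ) + 1) else 0) else 0) := by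
    intro x; split_ifs <;> ring
  rw [Finset.sum_congr rfl (fun x _ => key x), Finset.sum_sub_distrib,
    Finset.sum_ite_eq (Finset.univ : Finset (Fin k)) i]
  simp only [Finset.mem_univ, if_true]
  rcases Nat.eq_zero_or_pos (i:ℕ) with h0 | h1
  · have h2 : ∀ m ∈ (Finset.univ : Finset (Fin k)),
        (if (i:ℕ) = (m:ℕ) + 1 then (if (j:ℕ) ≤ (m:ℕ) then z⁻¹ ^ ((m:ℕ) - (j:ℕ) + 1) else 0) else 0) = 0 := by
      intro m _; rw [if_neg]; omega
    rw [Finset.sum_eq_zero h2, sub_zero]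
    by_cases hij : i = j
    · subst hij
      rw [if_pos (le_refl _), Nat.sub_self, pow_one, if_pos rfl]
      exact mul_inv_cancel₀ hz
    · have : ¬ ((j:ℕ) ≤ (i:ℕ)) := by
        rw [Fin.ext_iff] at hij; omega
      rw [if_neg this, if_neg hij]
  · have hi1 : (i:ℕ) - 1 < k := by omega
    set i' : Fin k := ⟨(i:ℕ) - 1, hi1⟩ with hi'
    have h2 : ∑ m : Fin k,
        (if (i:ℕ) = (m:ℕ) + 1 then (if (j:ℕ) ≤ (m:ℕ) then z⁻¹ ^ ((m:ℕ) - (j:ℕ) + 1) else 0) else 0)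
        = (if (j:ℕ) ≤ (i':ℕ) then z⁻¹ ^ ((i':ℕ) - (j:ℕ) + 1) else 0) := by
      rw [Finset.sum_eq_single i']
      · rw [if_pos]; simp only [hi']; omega
      · intro m _ hm
        rw [if_neg]
        intro hc
        apply hm
        rw [Fin.ext_iff]; simp only [hi']; omega
      · intro h; exact absurd (Finset.mem_univ i') h
    rw [h2]
    have hi'v : (i':ℕ) = (i:ℕ) - 1 := rfl
    by_cases hij : i = j
    · subst hij
      have : ¬ ((i:ℕ) ≤ (i':ℕ)) := by omega
      rw [if_neg this, sub_zero, if_pos (le_refl _), Nat.sub_self, pow_one, if_pos rfl]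
      exact mul_inv_cancel₀ hz
    · rw [if_neg hij]
      have hne : (j:ℕ) ≠ (i:ℕ) := by rw [Fin.ext_iff] at hij; omega
      by_cases hle : (j:ℕ) ≤ (i:ℕ)
      · have hle' : (j:ℕ) ≤ (i':ℕ) := by omega
        rw [if_pos hle, if_pos hle']
        have he : (i:ℕ) - (j:ℕ) + 1 = ((i':ℕ) - (j:ℕ) + 1) + 1 := by omega
        rw [he, pow_succ, ← mul_assoc, mul_comm z, mul_assoc, mul_inv_cancel₀ hz, mul_one, sub_self]
      · have hle' : ¬ ((j:ℕ) ≤ (i':ℕ)) := by omega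
        rw [if_neg hle, if_neg hle', sub_zero]

lemma detAux (k : ℕ) (ε : ℝ) (x : Fin k → ℝ) (z : ℝ) (hz : z ≠ 0) :
    (z • (1 : Matrix (Fin k) (Fin k) ℝ)
        - ((Matrix.of fun i j : Fin k => if (i : ℕ) = (j : ℕ) + 1 then (1 : ℝ) else 0)
            + Matrix.vecMulVec x (fun j => ε * x (Fin.rev j)))).det
    = z ^ k * (1 - ∑ i : Fin k, (ε * x (Fin.rev i)) * ∑ j : Fin k, Cmat k z i j * x j) := by
  set A : Matrix (Fin k) (Fin k) ℝ :=
    Matrix.of fun i j : Fin k => if (i : ℕ) = (j : ℕ) + 1 then (1 : ℝ) else 0 with hA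
  set M : Matrix (Fin k) (Fin k) ℝ := z • 1 - A with hM
  set w : Fin k → ℝ := fun j => ε * x (Fin.rev j) with hw
  have hsplit : z • (1 : Matrix (Fin k) (Fin k) ℝ) - (A + Matrix.vecMulVec x w)
      = M * (1 - Cmat k z * (Matrix.replicateCol Unit x * Matrix.replicateRow Unit w)) := by
    rw [Matrix.mul_sub, Matrix.mul_one, ← Matrix.mul_assoc, mulC k z hz, Matrix.one_mul,
      ← Matrix.vecMulVec_eq Unit, hM]
    abel
  rw [hsplit, Matrix.det_mul]
  have hdetM : M.det = z ^ k := by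
    have ht : M.BlockTriangular OrderDual.toDual := by
      intro i j hij
      have : (i : ℕ) < (j : ℕ) := hij
      have h1 : ¬ (i = j) := by rw [Fin.ext_iff]; omega
      have h2 : ¬ ((i:ℕ) = (j:ℕ) + 1) := by omega
      simp only [hM, hA, Matrix.sub_apply, Matrix.smul_apply, Matrix.one_apply, Matrix.of_apply,
        smul_eq_mul, if_neg h1, if_neg h2, mul_zero, sub_zero]
    rw [Matrix.det_of_lowerTriangular M ht]
    have : ∀ i : Fin k, M i i = z := by
      intro i
      simp [hM, hA, Matrix.one_apply, Matrix.sub_apply]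
    rw [Finset.prod_congr rfl (fun i _ => this i), Finset.prod_const, Finset.card_univ,
      Fintype.card_fin]
  rw [hdetM]
  congr 1
  rw [← Matrix.mul_assoc, Matrix.det_one_sub_mul_comm, Matrix.det_unique]
  simp [Matrix.sub_apply, Matrix.one_apply, Matrix.mul_apply, Matrix.replicateRow_apply, Matrix.replicateCol_apply,
    Finset.mul_sum, mul_assoc, hw]

def Tsum (k : ℕ) (x : Fin k → ℝ) (z : ℝ) : ℝ :=
  ∑ i : Fin k, ∑ j : Fin k,
    if (i:ℕ) + (j:ℕ) < k then x i * x j * z ^ ((i:ℕ) + (j:ℕ)) else 0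

lemma detVal (k : ℕ) (ε : ℝ) (x : Fin k → ℝ) (z : ℝ) (hz : z ≠ 0) :
    z ^ k * (1 - ∑ i : Fin k, (ε * x (Fin.rev i)) * ∑ j : Fin k, Cmat k z i j * x j)
    = z ^ k - ε * Tsum k x z := by
  rw [mul_sub, mul_one]
  congr 1
  rw [Finset.mul_sum]
  have point : ∀ i j : Fin k,
      z ^ k * ((ε * x (Fin.rev i)) * (Cmat k z i j * x j))
      = ε * (if ((Fin.rev i : ℕ) + (j:ℕ) < k) then
          x (Fin.rev i) * x j * z ^ ((Fin.rev i : ℕ) + (j:ℕ)) else 0) := by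
    intro i j
    have hrev : ((Fin.rev i : ℕ)) = k - ((i:ℕ) + 1) := Fin.val_rev i
    have hik : (i:ℕ) < k := i.isLt
    have hjk : (j:ℕ) < k := j.isLt
    by_cases h : (j:ℕ) ≤ (i:ℕ)
    · have hcond : (Fin.rev i : ℕ) + (j:ℕ) < k := by omega
      have hle : (i:ℕ) - (j:ℕ) + 1 ≤ k := by omega
      have hexp : k - ((i:ℕ) - (j:ℕ) + 1) = (Fin.rev i : ℕ) + (j:ℕ) := by omega
      rw [if_pos hcond, Cmat, Matrix.of_apply, if_pos h, inv_pow, ← hexp,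
        pow_sub₀ z hz hle]
      ring
    · have hcond : ¬ ((Fin.rev i : ℕ) + (j:ℕ) < k) := by omega
      rw [if_neg hcond, Cmat, Matrix.of_apply, if_neg h]
      ring
  calc ∑ i : Fin k, z ^ k * ((ε * x (Fin.rev i)) * ∑ j : Fin k, Cmat k z i j * x j)
      = ∑ i : Fin k, ∑ j : Fin k, ε * (if ((Fin.rev i : ℕ) + (j:ℕ) < k) then
          x (Fin.rev i) * x j * z ^ ((Fin.rev i : ℕ) + (j:ℕ)) else 0) := by
        refine Finset.sum_congr rfl fun i _ => ?_
        rw [Finset.mul_sum, Finset.mul_sum]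
        exact Finset.sum_congr rfl fun j _ => by rw [← point i j]
    _ = ∑ i : Fin k, ∑ j : Fin k, ε * (if ((i:ℕ) + (j:ℕ) < k) then
          x i * x j * z ^ ((i:ℕ) + (j:ℕ)) else 0) := by
        exact Fintype.sum_equiv Fin.revPerm _ _ (fun i => by simp [Fin.rev_rev])
    _ = ε * Tsum k x z := by
        rw [Tsum, Finset.mul_sum]
        exact Finset.sum_congr rfl fun i _ => (Finset.mul_sum _ _ _).symm

lemma sumform (k : ℕ) (x : Fin k → ℝ) (z : ℝ) :
    ∑ l ∈ Finset.range k,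
        (∑ i : Fin k, ∑ j : Fin k,
          if (i : ℕ) + (j : ℕ) = l then x i * x j else 0) * z ^ l
    = Tsum k x z := by
  rw [Tsum]
  have : ∀ l ∈ Finset.range k, (∑ i : Fin k, ∑ j : Fin k,
      if (i : ℕ) + (j : ℕ) = l then x i * x j else 0) * z ^ l
      = ∑ i : Fin k, ∑ j : Fin k,
        (if (i : ℕ) + (j : ℕ) = l then x i * x j * z ^ l else 0) := by
    intro l _
    rw [Finset.sum_mul]
    refine Finset.sum_congr rfl fun i _ => ?_
    rw [Finset.sum_mul]
    refine Finset.sum_congr rfl fun j _ => ?_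
    split_ifs <;> ring
  rw [Finset.sum_congr rfl this, Finset.sum_comm]
  refine Finset.sum_congr rfl fun i _ => ?_
  rw [Finset.sum_comm]
  refine Finset.sum_congr rfl fun j _ => ?_
  rw [Finset.sum_ite_eq (Finset.range k) ((i:ℕ) + (j:ℕ)) (fun l => x i * x j * z ^ l)]
  simp [Finset.mem_range]

lemma Tupdate (k : ℕ) (hk : 0 < k) (x : Fin k → ℝ) (lam δ : ℝ) :
    Tsum k (x + Pi.single (⟨0, hk⟩ : Fin k) δ) lam
    = Tsum k x lam + 2 * δ * (∑ j : Fin k, x j * lam ^ (j:ℕ)) + δ ^ 2 := by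
  set i0 : Fin k := ⟨0, hk⟩ with hi0
  have happ : ∀ i : Fin k, (x + Pi.single i0 δ : Fin k → ℝ) i = x i + (if i = i0 then δ else 0) := by
    intro i
    simp [Pi.single_apply]
  have hsplit : ∀ i j : Fin k,
      (if (i:ℕ) + (j:ℕ) < k then (x + Pi.single i0 δ : Fin k → ℝ) i * (x + Pi.single i0 δ : Fin k → ℝ) j * lam ^ ((i:ℕ) + (j:ℕ)) else 0)
      = (if (i:ℕ) + (j:ℕ) < k then x i * x j * lam ^ ((i:ℕ) + (j:ℕ)) else 0)
        + (if i = i0 then δ * x j * lam ^ (j:ℕ) else 0)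
        + (if j = i0 then δ * x i * lam ^ (i:ℕ) else 0)
        + (if i = i0 then (if j = i0 then δ * δ else 0) else 0) := by
    intro i j
    rw [happ i, happ j]
    have hv : ((i0 : Fin k) : ℕ) = 0 := rfl
    by_cases h1 : i = i0 <;> by_cases h2 : j = i0
    · subst h1; subst h2
      have hc : (i0:ℕ) + (i0:ℕ) < k := by omega
      simp [hv, hk]
      try ring
    · subst h1
      have hc : (i0:ℕ) + (j:ℕ) < k := by have := j.isLt; omega
      simp [hv, h2, j.isLt]
      try ring
    · subst h2
      have hc : (i:ℕ) + (i0:ℕ) < k := by have := i.isLt; omega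
      simp [hv, h1, i.isLt]
      try ring
    · simp [h1, h2]
  rw [Tsum, Tsum]
  rw [Finset.sum_congr rfl (fun i _ => Finset.sum_congr rfl (fun j _ => hsplit i j))]
  simp only [Finset.sum_add_distrib]
  have e1 : ∑ i : Fin k, ∑ j : Fin k, (if i = i0 then δ * x j * lam ^ (j:ℕ) else 0)
      = δ * ∑ j : Fin k, x j * lam ^ (j:ℕ) := by
    rw [Finset.sum_comm]
    rw [Finset.mul_sum]
    refine Finset.sum_congr rfl fun j _ => ?_
    rw [Finset.sum_ite_eq' Finset.univ i0 (fun _ => δ * x j * lam ^ (j:ℕ))]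
    simp; ring
  have e2 : ∑ i : Fin k, ∑ j : Fin k, (if j = i0 then δ * x i * lam ^ (i:ℕ) else 0)
      = δ * ∑ i : Fin k, x i * lam ^ (i:ℕ) := by
    rw [Finset.mul_sum]
    refine Finset.sum_congr rfl fun i _ => ?_
    rw [Finset.sum_ite_eq' Finset.univ i0 (fun _ => δ * x i * lam ^ (i:ℕ))]
    simp; ring
  have e3 : ∑ i : Fin k, ∑ j : Fin k, (if i = i0 then (if j = i0 then δ * δ else 0) else 0)
      = δ ^ 2 := by
    have h4 : ∀ i : Fin k, (∑ j : Fin k, if i = i0 then (if j = i0 then δ * δ else 0) else 0)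
        = if i = i0 then δ * δ else 0 := by
      intro i
      by_cases h : i = i0 <;> simp [h, Finset.sum_ite_eq']
    rw [Finset.sum_congr rfl (fun i _ => h4 i), Finset.sum_ite_eq' Finset.univ i0 (fun _ => δ * δ)]
    simp [sq]
  rw [e1, e2, e3]
  ring


/-- For the central concircular tensor `L = A + r ⊗ r^♭` with a single nilpotent Jordan
block `A = J_k(0)^T` (ones on the subdiagonal) and skew-diagonal metric `g = ε S_k`
(so `(r^♭)_j = ε x^{k+1−j}`), the characteristic polynomial is
`p(z) = z^k − ε Σ_{l=0}^{k−1} (Σ_{i+j=l} x_i x_j) z^l` (in 0-based indexing the inner sum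
is over ordered pairs with `i + j = l`, matching `Σ_{i=1}^{l+1} x^i x^{l+2−i}`), and `L`
has no constant eigenvalues: there is no `λ ∈ ℝ` with `p(λ, x) = 0` for all `x` in a
nonempty open subset of `ℝᵏ`. -/
theorem stmt_8 {k : ℕ} (hk : 0 < k) (ε : ℝ) (hε : ε = 1 ∨ ε = -1) :
    (∀ (x : Fin k → ℝ) (z : ℝ),
      (z • (1 : Matrix (Fin k) (Fin k) ℝ)
        - ((Matrix.of fun i j : Fin k => if (i : ℕ) = (j : ℕ) + 1 then (1 : ℝ) else 0)
            + Matrix.vecMulVec x (fun j => ε * x (Fin.rev j)))).det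
      = z ^ k - ε * ∑ l ∈ Finset.range k,
          (∑ i : Fin k, ∑ j : Fin k,
            if (i : ℕ) + (j : ℕ) = l then x i * x j else 0) * z ^ l)
    ∧ ¬ ∃ lam : ℝ, ∃ U : Set (Fin k → ℝ), IsOpen U ∧ U.Nonempty ∧
        ∀ x ∈ U,
          (lam • (1 : Matrix (Fin k) (Fin k) ℝ)
            - ((Matrix.of fun i j : Fin k => if (i : ℕ) = (j : ℕ) + 1 then (1 : ℝ) else 0)
                + Matrix.vecMulVec x (fun j => ε * x (Fin.rev j)))).det = 0 := by
  have part1 : ∀ (x : Fin k → ℝ) (z : ℝ),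
      (z • (1 : Matrix (Fin k) (Fin k) ℝ)
        - ((Matrix.of fun i j : Fin k => if (i : ℕ) = (j : ℕ) + 1 then (1 : ℝ) else 0)
            + Matrix.vecMulVec x (fun j => ε * x (Fin.rev j)))).det
      = z ^ k - ε * ∑ l ∈ Finset.range k,
          (∑ i : Fin k, ∑ j : Fin k,
            if (i : ℕ) + (j : ℕ) = l then x i * x j else 0) * z ^ l := by
    intro x
    have hfc : Continuous (fun z : ℝ =>
        (z • (1 : Matrix (Fin k) (Fin k) ℝ)
          - ((Matrix.of fun i j : Fin k => if (i : ℕ) = (j : ℕ) + 1 then (1 : ℝ) else 0)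
              + Matrix.vecMulVec x (fun j => ε * x (Fin.rev j)))).det) := by
      apply Continuous.matrix_det
      exact (continuous_id.smul continuous_const).sub continuous_const
    have hgc : Continuous (fun z : ℝ => z ^ k - ε * ∑ l ∈ Finset.range k,
          (∑ i : Fin k, ∑ j : Fin k,
            if (i : ℕ) + (j : ℕ) = l then x i * x j else 0) * z ^ l) := by
      apply (continuous_pow k).sub
      apply continuous_const.mul
      apply continuous_finset_sum
      intro l _
      exact continuous_const.mul (continuous_pow l)
    have heq : Set.EqOn (fun z : ℝ =>
        (z • (1 : Matrix (Fin k) (Fin k) ℝ)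
          - ((Matrix.of fun i j : Fin k => if (i : ℕ) = (j : ℕ) + 1 then (1 : ℝ) else 0)
              + Matrix.vecMulVec x (fun j => ε * x (Fin.rev j)))).det)
        (fun z : ℝ => z ^ k - ε * ∑ l ∈ Finset.range k,
          (∑ i : Fin k, ∑ j : Fin k,
            if (i : ℕ) + (j : ℕ) = l then x i * x j else 0) * z ^ l)
        {(0:ℝ)}ᶜ := by
      intro z hz
      have hz' : z ≠ 0 := hz
      show _ = _
      simp only []
      rw [detAux k ε x z hz', detVal k ε x z hz', sumform k x z]
    have hfun := Continuous.ext_on (dense_compl_singleton (0:ℝ)) hfc hgc heq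
    intro z
    exact congrFun hfun z
  refine ⟨part1, ?_⟩
  rintro ⟨lam, U, hU, ⟨x0, hx0⟩, hall⟩
  obtain ⟨r, hr, hball⟩ := Metric.isOpen_iff.mp hU x0 hx0
  have key : ∀ y ∈ U, lam ^ k - ε * Tsum k y lam = 0 := by
    intro y hy
    have h := hall y hy
    rw [part1 y lam, sumform k y lam] at h
    exact h
  set i0 : Fin k := ⟨0, hk⟩ with hi0
  set q : ℝ := ∑ j : Fin k, x0 j * lam ^ (j:ℕ) with hq
  have hmem : ∀ δ : ℝ, 0 ≤ δ → δ < r → (x0 + Pi.single i0 δ : Fin k → ℝ) ∈ U := by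
    intro δ h0 h1
    apply hball
    rw [Metric.mem_ball]
    rw [dist_pi_lt_iff hr]
    intro b
    rw [Real.dist_eq]
    have : (x0 + Pi.single i0 δ : Fin k → ℝ) b - x0 b = if b = i0 then δ else 0 := by
      simp [Pi.single_apply]
    rw [this]
    split_ifs
    · rw [abs_of_nonneg h0]; exact h1
    · simpa using hr
  have main : ∀ δ : ℝ, 0 ≤ δ → δ < r → 2 * δ * q + δ ^ 2 = 0 := by
    intro δ h0 h1
    have h2 := key _ (hmem δ h0 h1)
    have h3 := key x0 hx0
    rw [Tupdate k hk x0 lam δ] at h2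
    rcases hε with h | h <;> rw [h] at h2 h3 <;> linarith
  have A1 := main (r/2) (by linarith) (by linarith)
  have A2 := main (r/4) (by linarith) (by linarith)
  nlinarith [A1, A2, hr, mul_pos hr hr]
end

section
/- Let V be a pseudo-Euclidean space, a ∈ V with ⟨a,a⟩ = 0 and a self-adjoint operator A on V. Suppose ⟨a, Aˡa⟩ = 0 for 0 ≤ l < k and ⟨a, Aᵏa⟩ ≠ 0. Then the vectors a, Aa, …, Aᵏa are linearly independent and the subspace H = span{a, Aa, …, Aᵏa} is nondegenerate with respect to the scalar product. -/
/-- If `a` is a null vector and `A` is self-adjoint with `⟨a, Aˡa⟩ = 0` for `0 ≤ l < k`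
and `⟨a, Aᵏa⟩ ≠ 0`, then `a, Aa, …, Aᵏa` are linearly independent and
`H = span{a, Aa, …, Aᵏa}` is a nondegenerate subspace. -/
theorem stmt_11 {V : Type*} [AddCommGroup V] [Module ℝ V] [FiniteDimensional ℝ V]
    (B : LinearMap.BilinForm ℝ V) (hsymm : ∀ x y, B x y = B y x)
    (hnd : ∀ v, (∀ w, B v w = 0) → v = 0)
    (A : V →ₗ[ℝ] V) (hsa : ∀ x y, B (A x) y = B x (A y))
    (a : V) (ha : B a a = 0) (k : ℕ)
    (h0 : ∀ l < k, B a ((A ^ l) a) = 0)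
    (hk : B a ((A ^ k) a) ≠ 0) :
    LinearIndependent ℝ (fun i : Fin (k + 1) => (A ^ (i : ℕ)) a)
    ∧ ∀ v ∈ Submodule.span ℝ (Set.range (fun i : Fin (k + 1) => (A ^ (i : ℕ)) a)),
        (∀ w ∈ Submodule.span ℝ (Set.range (fun i : Fin (k + 1) => (A ^ (i : ℕ)) a)),
          B v w = 0) → v = 0 := by
  have key : ∀ i j : ℕ, B ((A ^ i) a) ((A ^ j) a) = B a ((A ^ (i + j)) a) := by
    intro i
    induction i with
    | zero => intro j; simp
    | succ n ih =>
      intro j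
      have h1 : (A ^ (n + 1)) a = A ((A ^ n) a) := by
        rw [pow_succ']; rfl
      have h2 : A ((A ^ j) a) = (A ^ (j + 1)) a := by
        rw [pow_succ']; rfl
      rw [h1, hsa, h2, ih (j + 1), show n + (j + 1) = n + 1 + j by omega]
  have claim : ∀ c : Fin (k + 1) → ℝ,
      (∀ j : Fin (k + 1), B (∑ i, c i • (A ^ (i : ℕ)) a) ((A ^ (j : ℕ)) a) = 0) →
      ∀ i, c i = 0 := by
    intro c hc
    have main : ∀ m, m ≤ k → ∀ i : Fin (k + 1), (i : ℕ) = k - m → c i = 0 := by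
      intro m
      induction m using Nat.strong_induction_on with
      | _ m ih =>
        intro hm i0 hi0
        have hj := hc ⟨m, by omega⟩
        simp only [map_sum, map_smul, LinearMap.sum_apply, LinearMap.smul_apply, smul_eq_mul] at hj
        rw [Finset.sum_eq_single i0] at hj
        · rw [key, hi0, show k - m + m = k by omega] at hj
          exact (mul_eq_zero.mp hj).resolve_right hk
        · intro i _ hne
          have hik : (i : ℕ) ≤ k := by omega
          have hne' : (i : ℕ) ≠ k - m := fun h => hne (Fin.ext (by omega))
          rcases lt_or_gt_of_ne hne' with hlt | hgt
          · rw [key, h0 _ (by omega), mul_zero]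
          · rw [ih (k - i) (by omega) (by omega) i (by omega), zero_mul]
        · intro h; exact absurd (Finset.mem_univ _) h
    intro i
    exact main (k - i) (by omega) i (by omega)
  constructor
  · rw [Fintype.linearIndependent_iff]
    intro c hcsum
    refine claim c ?_
    intro j
    rw [hcsum, map_zero]
    rfl
  · intro v hv hw
    obtain ⟨c, hc⟩ := (Submodule.mem_span_range_iff_exists_fun ℝ).mp hv
    have hz : ∀ i, c i = 0 := by
      refine claim c ?_
      intro j
      rw [hc]
      exact hw _ (Submodule.subset_span ⟨j, rfl⟩)
    rw [← hc]
    simp [hz]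
end

section
/- Let A be a self-adjoint operator on E^{n+2}_{ν+1}, a a null vector, b ∈ P^n_ν, and define Ã = A_b := P_b A P_b* where P_b(Y) = Y − ⟨Y,b⟩a. If ⟨a, Aˡa⟩ = 0 for all 0 ≤ l < k, then for each 0 ≤ l ≤ k: Ãˡ a = Aˡ a − Σ_{j=0}^{l−1} ⟨b, A^{l−j} a⟩ Ãʲ a, and consequently ⟨a, Ãˡ a⟩ = ⟨a, Aˡ a⟩ for 0 ≤ l ≤ k. -/
/-- For `Ã = A_b` (the modification of the self-adjoint operator `A` with `Ã b = 0`):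
if `⟨a, Aˡa⟩ = 0` for `0 ≤ l < k`, then for each `0 ≤ l ≤ k`,
`Ãˡ a = Aˡ a − Σ_{j=0}^{l−1} ⟨b, A^{l−j} a⟩ Ãʲ a`, and consequently
`⟨a, Ãˡ a⟩ = ⟨a, Aˡ a⟩` for `0 ≤ l ≤ k`. -/
theorem stmt_14 {V : Type*} [AddCommGroup V] [Module ℝ V]
    (B : LinearMap.BilinForm ℝ V) (hsymm : ∀ x y, B x y = B y x)
    (A : V →ₗ[ℝ] V) (hsa : ∀ x y, B (A x) y = B x (A y))
    (a b : V) (ha : B a a = 0) (hb : B b b = 0) (hab : B a b = 1)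
    (At : V →ₗ[ℝ] V)
    (hAt : ∀ v, At v
      = A v - (B v a) • A b - (B (A v) b) • a + ((B v a) * (B (A b) b)) • a)
    (k : ℕ) (h0 : ∀ l < k, B a ((A ^ l) a) = 0) :
    (∀ l ≤ k, (At ^ l) a
        = (A ^ l) a - ∑ j ∈ Finset.range l, (B b ((A ^ (l - j)) a)) • (At ^ j) a)
    ∧ (∀ l ≤ k, B a ((At ^ l) a) = B a ((A ^ l) a)) := by
  have key : ∀ l, l ≤ k →
      ((At ^ l) a
        = (A ^ l) a - ∑ j ∈ Finset.range l, (B b ((A ^ (l - j)) a)) • (At ^ j) a)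
      ∧ (∀ j ≤ l, B a ((At ^ j) a) = B a ((A ^ j) a)) := by
    intro l
    induction l with
    | zero =>
      intro _
      refine ⟨by simp, ?_⟩
      intro j hj
      interval_cases j
      rfl
    | succ m ih =>
      intro hm1
      have hmk : m < k := hm1
      obtain ⟨hP, hQ⟩ := ih (le_of_lt hmk)
      have hzero : ∀ j ≤ m, B a ((At ^ j) a) = 0 := fun j hj =>
        (hQ j hj).trans (h0 j (lt_of_le_of_lt hj hmk))
      have e1 : (A ^ (m + 1)) a = A ((A ^ m) a) := by rw [pow_succ']; rfl
      have e2 : B ((A ^ m) a) a = 0 := (hsymm _ _).trans (h0 m hmk)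
      have hAtA : At ((A ^ m) a) = (A ^ (m + 1)) a - (B b ((A ^ (m + 1)) a)) • a := by
        rw [hAt, e1, e2, hsymm (A ((A ^ m) a)) b]
        simp
      have eP : (At ^ (m + 1)) a
          = At ((A ^ m) a)
            - ∑ j ∈ Finset.range m, (B b ((A ^ (m - j)) a)) • (At ^ (j + 1)) a := by
        have h1 : (At ^ (m + 1)) a = At ((At ^ m) a) := by rw [pow_succ']; rfl
        rw [h1, hP, map_sub, map_sum]
        congr 1
        refine Finset.sum_congr rfl fun j hj => ?_
        rw [map_smul]
        congr 1
        rw [pow_succ']; rfl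
      have hP1 : (At ^ (m + 1)) a
          = (A ^ (m + 1)) a
            - ∑ j ∈ Finset.range (m + 1), (B b ((A ^ (m + 1 - j)) a)) • (At ^ j) a := by
        rw [eP, hAtA, Finset.sum_range_succ']
        simp only [Nat.succ_sub_succ, Nat.sub_zero, pow_zero, Module.End.one_apply]
        abel
      refine ⟨hP1, ?_⟩
      intro j hj
      rcases Nat.eq_or_lt_of_le hj with h | h
      · subst h
        rw [hP1, map_sub, map_sum]
        have : ∀ i ∈ Finset.range (m + 1),
            B a ((B b ((A ^ (m + 1 - i)) a)) • (At ^ i) a) = 0 := by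
          intro i hi
          rw [map_smul, smul_eq_mul, hzero i (Nat.lt_succ_iff.mp (Finset.mem_range.mp hi)),
            mul_zero]
        rw [Finset.sum_eq_zero this, sub_zero]
      · exact hQ j (Nat.lt_succ_iff.mp h)
  exact ⟨fun l hl => (key l hl).1, fun l hl => (key l hl).2 l le_rfl⟩
end

section
/- Let V be a pseudo-Euclidean space, a a null vector, and A self-adjoint with ⟨a, Aˡa⟩ = 0 for 0 ≤ l < k and ⟨a, Aᵏa⟩ ≠ 0. Define scalars b_l recursively by 2b_l = ⟨Aˡa, Aᵏa⟩/⟨a, Aᵏa⟩ − Σ_{j=1}^{l−1} b_{l−j} b_j (for 1 ≤ l ≤ k, with b_0 = 0 implicit), and vectors s_l = Aˡa − Σ_{j=0}^{l−1} b_{l−j} s_j. Then (s_0, s_1, …, s_k) is a skew-normal sequence: ⟨s_i, s_j⟩ = 0 whenever i + j ≠ k, and ⟨s_i, s_j⟩ = ⟨a, Aᵏa⟩ whenever i + j = k. -/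
/-- The recursively defined vectors `s_l = Aˡa − Σ_{j=0}^{l−1} b_{l−j} s_j`, with scalars
`2b_l = ⟨Aˡa, Aᵏa⟩/⟨a, Aᵏa⟩ − Σ_{j=1}^{l−1} b_{l−j} b_j`, form a skew-normal sequence:
`⟨s_i, s_j⟩ = 0` for `i + j ≠ k` and `⟨s_i, s_j⟩ = ⟨a, Aᵏa⟩` for `i + j = k`
(for `0 ≤ i, j ≤ k`). -/
theorem stmt_15 {V : Type*} [AddCommGroup V] [Module ℝ V]
    (B : LinearMap.BilinForm ℝ V) (hsymm : ∀ x y, B x y = B y x)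
    (A : V →ₗ[ℝ] V) (hsa : ∀ x y, B (A x) y = B x (A y))
    (a : V) (ha : B a a = 0) (k : ℕ)
    (h0 : ∀ l < k, B a ((A ^ l) a) = 0)
    (hk : B a ((A ^ k) a) ≠ 0)
    (c : ℕ → ℝ)
    (hc : ∀ l, 1 ≤ l → l ≤ k →
      2 * c l = B ((A ^ l) a) ((A ^ k) a) / B a ((A ^ k) a)
        - ∑ j ∈ Finset.Ico 1 l, c (l - j) * c j)
    (s : ℕ → V)
    (hs : ∀ l ≤ k, s l = (A ^ l) a - ∑ j ∈ Finset.range l, c (l - j) • s j) :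
    ∀ i ≤ k, ∀ j ≤ k,
      (i + j ≠ k → B (s i) (s j) = 0)
      ∧ (i + j = k → B (s i) (s j) = B a ((A ^ k) a)) := by
  set γ := B a ((A ^ k) a) with hγ
  -- moments
  have hBm : ∀ i j : ℕ, B ((A ^ i) a) ((A ^ j) a) = B a ((A ^ (i + j)) a) := by
    intro i
    induction i with
    | zero => intro j; simp
    | succ n ih =>
      intro j
      have h1 : (A ^ (n + 1)) a = A ((A ^ n) a) := by
        rw [pow_succ']; rfl
      have h2 : A ((A ^ j) a) = (A ^ (j + 1)) a := by
        rw [pow_succ']; rfl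
      rw [h1, hsa, h2, ih (j + 1)]
      ring_nf
  have hs0 : s 0 = a := by
    have := hs 0 (Nat.zero_le k)
    simpa using this
  -- recursion for U i j = B (s i) ((A^j) a)
  have hU : ∀ i ≤ k, ∀ j : ℕ, B (s i) ((A ^ j) a)
      = B a ((A ^ (i + j)) a)
        - ∑ p ∈ Finset.range i, c (i - p) * B (s p) ((A ^ j) a) := by
    intro i hi j
    rw [hs i hi]
    simp [LinearMap.BilinForm.sub_left, LinearMap.BilinForm.sum_left,
      LinearMap.BilinForm.smul_left, hBm, smul_eq_mul]
  -- shift lemma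
  have hshift : ∀ i, i + 1 ≤ k → ∀ j, j < k →
      B (s (i + 1)) ((A ^ j) a) = B (s i) ((A ^ (j + 1)) a) := by
    intro i
    induction i using Nat.strong_induction_on with
    | _ i ih =>
      intro hi j hj
      rw [hU (i + 1) hi j, hU i (le_of_lt hi) (j + 1)]
      have hsum : ∑ p ∈ Finset.range (i + 1), c (i + 1 - p) * B (s p) ((A ^ j) a)
          = ∑ p ∈ Finset.range i, c (i - p) * B (s p) ((A ^ (j + 1)) a) := by
        rw [Finset.sum_range_succ']
        have h00 : B (s 0) ((A ^ j) a) = 0 := by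
          rw [hs0]; exact h0 j hj
        rw [h00]
        have heq : ∀ p ∈ Finset.range i,
            c (i + 1 - (p + 1)) * B (s (p + 1)) ((A ^ j) a)
            = c (i - p) * B (s p) ((A ^ (j + 1)) a) := by
          intro p hp
          rw [Finset.mem_range] at hp
          have h1 : i + 1 - (p + 1) = i - p := by omega
          rw [h1, ih p hp (by omega) j hj]
        rw [Finset.sum_congr rfl heq]
        ring
      rw [hsum]
      have h3 : i + 1 + j = i + (j + 1) := by omega
      rw [h3]
  -- low U
  have hUlow : ∀ i ≤ k, ∀ j, i + j ≤ k → B (s i) ((A ^ j) a) = B a ((A ^ (i + j)) a) := by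
    intro i
    induction i with
    | zero => intro _ j _; rw [hs0]; simp
    | succ n ih =>
      intro hn j hj
      rw [hshift n hn j (by omega), ih (by omega) (j + 1) (by omega)]
      have h3 : n + (j + 1) = n + 1 + j := by omega
      rw [h3]
  -- high U
  have hUhigh : ∀ d ≤ k, ∀ l, l + d ≤ k →
      B (s (l + d)) ((A ^ (k - d)) a) = B (s l) ((A ^ k) a) := by
    intro d
    induction d with
    | zero => intro _ l _; simp
    | succ n ih =>
      intro hn l hl
      have h1 : l + (n + 1) = (l + n) + 1 := by omega
      have h2 : k - (n + 1) + 1 = k - n := by omega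
      rw [h1, hshift (l + n) (by omega) (k - (n + 1)) (by omega), h2,
        ih (by omega) l (by omega)]
  -- g l := B (s l) ((A^k) a) = c l * γ
  have hg : ∀ l, 1 ≤ l → l ≤ k → B (s l) ((A ^ k) a) = c l * γ := by
    intro l
    induction l using Nat.strong_induction_on with
    | _ l ih =>
      intro hl1 hlk
      rw [hU l hlk k]
      have hsplit : ∑ p ∈ Finset.range l, c (l - p) * B (s p) ((A ^ k) a)
          = c l * γ + (∑ p ∈ Finset.Ico 1 l, c (l - p) * c p) * γ := by
        rw [Finset.range_eq_Ico, Finset.sum_eq_sum_Ico_succ_bot (by omega)]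
        rw [hs0]
        have heq : ∀ p ∈ Finset.Ico 1 l,
            c (l - p) * B (s p) ((A ^ k) a) = c (l - p) * c p * γ := by
          intro p hp
          rw [Finset.mem_Ico] at hp
          rw [ih p hp.2 hp.1 (by omega)]
          ring
        rw [Finset.sum_congr rfl heq, Finset.sum_mul]
        simp [← hγ, mul_assoc]
      rw [hsplit]
      have hcl := hc l hl1 hlk
      rw [hBm l k] at hcl
      have hSig : ∑ p ∈ Finset.Ico 1 l, c (l - p) * c p
          = B a ((A ^ (l + k)) a) / γ - 2 * c l := by linarith [hcl]
      rw [hSig]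
      field_simp
      ring
  -- low W
  have hWlow : ∀ i ≤ k, ∀ j, i + j ≤ k → B (s i) (s j) = B a ((A ^ (i + j)) a) := by
    intro i hi j
    induction j using Nat.strong_induction_on with
    | _ j ihj =>
      intro hij
      rw [hs j (by omega)]
      rw [map_sub, map_sum]
      have hz : ∑ q ∈ Finset.range j, B (s i) (c (j - q) • s q) = 0 := by
        apply Finset.sum_eq_zero
        intro q hq
        rw [Finset.mem_range] at hq
        rw [map_smul, ihj q hq (by omega), h0 (i + q) (by omega)]
        simp
      rw [hz, hUlow i hi j hij]
      simp
  -- high W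
  have hWhigh : ∀ j ≤ k, ∀ i ≤ k, k < i + j → B (s i) (s j) = 0 := by
    intro j
    induction j using Nat.strong_induction_on with
    | _ j ihj =>
      intro hj i hi hij
      rw [hs j hj, map_sub, map_sum]
      have hUv : B (s i) ((A ^ j) a) = c (i + j - k) * γ := by
        have h1 : i = (i + j - k) + (k - j) := by omega
        have h2 : j = k - (k - j) := by omega
        calc B (s i) ((A ^ j) a)
            = B (s ((i + j - k) + (k - j))) ((A ^ (k - (k - j))) a) := by rw [← h1, ← h2]
          _ = B (s (i + j - k)) ((A ^ k) a) := hUhigh (k - j) (by omega) (i + j - k) (by omega)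
          _ = c (i + j - k) * γ := hg (i + j - k) (by omega) (by omega)
      have hz : ∑ q ∈ Finset.range j, B (s i) (c (j - q) • s q) = c (i + j - k) * γ := by
        rw [Finset.sum_eq_single (k - i)]
        · rw [map_smul]
          have h1 : j - (k - i) = i + j - k := by omega
          have h2 : i + (k - i) = k := by omega
          rw [hWlow i hi (k - i) (by omega), h2, h1]
          simp [smul_eq_mul, ← hγ]
        · intro q hq hne
          rw [Finset.mem_range] at hq
          rw [map_smul, smul_eq_mul]
          rcases lt_or_ge (i + q) k with hlt | hge
          · rw [hWlow i hi q (by omega), h0 (i + q) hlt, mul_zero]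
          · have : k < i + q := by omega
            rw [ihj q hq (by omega) i hi this, mul_zero]
        · intro hni
          exact absurd (Finset.mem_range.mpr (by omega)) hni
      rw [hz, hUv]
      ring
  -- conclusion
  intro i hi j hj
  constructor
  · intro hne
    rcases lt_or_ge (i + j) k with hlt | hge
    · rw [hWlow i hi j (by omega)]
      exact h0 (i + j) hlt
    · exact hWhigh j hj i hi (by omega)
  · intro heq
    rw [hWlow i hi j (by omega), heq]
end

section
/- Let L = A + r ⊗ r^♭ on E^n_ν with A = diag(λ₁,…,λₙ) and metric diag(ε₁,…,εₙ). Define R = I − r⊗r^♭/r² (for r² ≠ 0) and L_E = R L R*. Then det over the ambient space satisfies det(L_E + r⊗r^♭/r²) = r^{−2}( det L − det A ), equivalently p_spherical(z) := det(zR − L_E + r⊗r^♭/r²) = r^{−2}( B(z) − p_c(z) ) where B(z) = det(zI − A) and p_c(z) = det(zI − L). -/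
open Matrix Polynomial Finset

section helpers
variable {n : ℕ}


variable {R : Type*} [CommRing R]

lemma vmv_mul_vmv (x w u v : Fin n → R) :
    vecMulVec x w * vecMulVec u v = (w ⬝ᵥ u) • vecMulVec x v := by
  ext i j
  simp only [mul_apply, vecMulVec_apply, Matrix.smul_apply, dotProduct, smul_eq_mul,
    Finset.sum_mul, Finset.mul_sum]
  exact Finset.sum_congr rfl fun k _ => by ring

lemma diagonal_mul_vmv (d x w : Fin n → R) :
    diagonal d * vecMulVec x w = vecMulVec (fun i => d i * x i) w := by
  ext i j
  rw [diagonal_mul, vecMulVec_apply, vecMulVec_apply, mul_assoc]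

lemma vmv_mul_diagonal (d x w : Fin n → R) :
    vecMulVec x w * diagonal d = vecMulVec x (fun j => w j * d j) := by
  ext i j
  rw [mul_diagonal, vecMulVec_apply, vecMulVec_apply, mul_assoc]

lemma det_one_add_vmv (u v : Fin n → R) :
    (1 + vecMulVec u v).det = 1 + ∑ i, v i * u i := by
  rw [vecMulVec_eq Unit, det_one_add_replicateCol_mul_replicateRow, dotProduct]

lemma prod_erase_eq (d : Fin n → ℝ) (hd : ∀ i, d i ≠ 0) (i : Fin n) :
    ∏ j ∈ univ.erase i, d j = (∏ j, d j) / d i := by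
  rw [eq_div_iff (hd i), mul_comm, Finset.mul_prod_erase univ d (mem_univ i)]

lemma L1gen (d x w : Fin n → ℝ) (c : ℝ) (hd : ∀ i, d i ≠ 0) :
    (diagonal d + c • vecMulVec x w).det
      = (∏ i, d i) + c * ∑ i, x i * w i * ∏ j ∈ univ.erase i, d j := by
  have h1 : c • vecMulVec x w = vecMulVec (fun i => d i * (c * x i / d i)) w := by
    ext i j
    simp only [Matrix.smul_apply, vecMulVec_apply, smul_eq_mul]
    rw [mul_comm (d i), div_mul_cancel₀ _ (hd i), mul_assoc]
  have key : diagonal d + c • vecMulVec x w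
      = diagonal d * (1 + vecMulVec (fun i => c * x i / d i) w) := by
    rw [mul_add, mul_one, diagonal_mul_vmv, h1]
  rw [key]
  rw [det_mul]
  rw [det_diagonal]
  rw [det_one_add_vmv]
  rw [mul_add, mul_one, Finset.mul_sum, Finset.mul_sum]
  congr 1
  refine Finset.sum_congr rfl fun i _ => ?_
  rw [prod_erase_eq d hd i]
  field_simp

lemma FG_eq {R : Type*} [CommRing R] (M D Di P : Matrix (Fin n) (Fin n) R) (a b : R)
    (hMP : M * P = 0) (hPM : P * M = 0) (hDDi : D * Di = 1)
    (hPDiP : P * (Di * P) = b • P) (hab : a * b = 1) :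
    (M * D + P) * (M + a • (Di * P)) = M * D * M + P := by
  have t1 : M * D * (a • (Di * P)) = 0 := by
    rw [mul_smul_comm, mul_assoc M D (Di * P), ← mul_assoc D Di P, hDDi, one_mul, hMP,
      smul_zero]
  have t2 : P * (a • (Di * P)) = P := by
    rw [mul_smul_comm, hPDiP, smul_smul, hab, one_smul]
  rw [add_mul, mul_add, mul_add, t1, t2, hPM, add_zero, zero_add]

lemma L2gen (d x w : Fin n → ℝ) (hd : ∀ i, d i ≠ 0) (hr2 : x ⬝ᵥ w ≠ 0)
    (hσ : (∑ i, w i * (d i)⁻¹ * x i) ≠ 0) :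
    ((1 - (x ⬝ᵥ w)⁻¹ • vecMulVec x w) * diagonal d * (1 - (x ⬝ᵥ w)⁻¹ • vecMulVec x w)
        + (x ⬝ᵥ w)⁻¹ • vecMulVec x w).det
      = (x ⬝ᵥ w)⁻¹ * (∑ i, w i * (d i)⁻¹ * x i) * ∏ i, d i := by
  set r2 : ℝ := x ⬝ᵥ w with hr2d
  set σ : ℝ := ∑ i, w i * (d i)⁻¹ * x i with hσd
  set V : Matrix (Fin n) (Fin n) ℝ := vecMulVec x w with hV
  set P : Matrix (Fin n) (Fin n) ℝ := r2⁻¹ • V with hPd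
  set M : Matrix (Fin n) (Fin n) ℝ := 1 - P with hMd
  have hwx : w ⬝ᵥ x = r2 := dotProduct_comm w x
  have hVV : V * V = r2 • V := by rw [hV, vmv_mul_vmv, hwx]
  have hPP : P * P = P := by
    rw [hPd, smul_mul_assoc, mul_smul_comm, hVV, smul_smul, smul_smul]
    congr 1
    field_simp
  have hMP : M * P = 0 := by rw [hMd, sub_mul, one_mul, hPP, sub_self]
  have hPM : P * M = 0 := by rw [hMd, mul_sub, mul_one, hPP, sub_self]
  set D : Matrix (Fin n) (Fin n) ℝ := diagonal d with hDd
  set Di : Matrix (Fin n) (Fin n) ℝ := diagonal (fun i => (d i)⁻¹) with hDid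
  have hDDi : D * Di = 1 := by
    rw [hDd, hDid, diagonal_mul_diagonal]
    have : (fun i => d i * (d i)⁻¹) = fun _ : Fin n => (1 : ℝ) := by
      funext i; exact mul_inv_cancel₀ (hd i)
    rw [this, diagonal_one]
  have hDiP : Di * P = r2⁻¹ • vecMulVec (fun i => (d i)⁻¹ * x i) w := by
    rw [hPd, hV, mul_smul_comm, hDid, diagonal_mul_vmv]
  have hPDiP : P * (Di * P) = (r2⁻¹ * σ) • P := by
    rw [hDiP, hPd, hV, smul_mul_assoc, mul_smul_comm, vmv_mul_vmv, smul_smul, smul_smul,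
      smul_smul]
    congr 1
    rw [dotProduct]
    have : ∑ i, w i * ((d i)⁻¹ * x i) = σ := by
      rw [hσd]; exact Finset.sum_congr rfl fun i _ => by ring
    rw [this]; ring
  set F : Matrix (Fin n) (Fin n) ℝ := M * D + P with hFd
  set G : Matrix (Fin n) (Fin n) ℝ := M + (r2 * σ⁻¹) • (Di * P) with hGd
  have hab : r2 * σ⁻¹ * (r2⁻¹ * σ) = 1 := by
    field_simp
    try ring
  have hFG : F * G = M * D * M + P :=
    FG_eq M D Di P (r2 * σ⁻¹) (r2⁻¹ * σ) hMP hPM hDDi hPDiP hab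
  have hdetF : F.det = r2⁻¹ * σ * ∏ i, d i := by
    have hPD : P * D = r2⁻¹ • vecMulVec x (fun j => w j * d j) := by
      rw [hPd, hV, smul_mul_assoc, vmv_mul_diagonal]
    have hF2 : F = D * (1 + vecMulVec (fun i => (d i)⁻¹ * x i)
        (fun j => r2⁻¹ * (w j - w j * d j))) := by
      rw [hFd, hMd, sub_mul, one_mul, hPD, mul_add, mul_one, hDd, diagonal_mul_vmv]
      have hx : (fun i => d i * ((d i)⁻¹ * x i)) = x := by
        funext i
        rw [← mul_assoc, mul_inv_cancel₀ (hd i), one_mul]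
      rw [hx, hPd, hV]
      ext i j
      simp only [Matrix.add_apply, Matrix.sub_apply, Matrix.smul_apply, vecMulVec_apply,
        smul_eq_mul]
      ring
    rw [hF2, det_mul, hDd, det_diagonal, det_one_add_vmv]
    have : ∀ j : Fin n, r2⁻¹ * (w j - w j * d j) * ((d j)⁻¹ * x j)
        = r2⁻¹ * (w j * (d j)⁻¹ * x j) - r2⁻¹ * (x j * w j) := by
      intro j; field_simp [hd j]
    rw [Finset.sum_congr rfl fun j _ => this j, Finset.sum_sub_distrib, ← Finset.mul_sum,
      ← Finset.mul_sum, ← hσd]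
    have hxw : ∑ j, x j * w j = r2 := by rw [hr2d, dotProduct]
    rw [hxw, inv_mul_cancel₀ hr2]
    ring
  have hdetG : G.det = 1 := by
    have hG2 : G = 1 + vecMulVec
        (fun i => (r2 * σ⁻¹ * r2⁻¹) * ((d i)⁻¹ * x i) - r2⁻¹ * x i) w := by
      rw [hGd, hMd, hDiP, hPd, hV, smul_smul]
      ext i j
      simp only [Matrix.add_apply, Matrix.sub_apply, Matrix.smul_apply, vecMulVec_apply,
        smul_eq_mul, Matrix.one_apply]
      ring
    rw [hG2, det_one_add_vmv]
    have : ∀ i : Fin n, w i * ((r2 * σ⁻¹ * r2⁻¹) * ((d i)⁻¹ * x i) - r2⁻¹ * x i)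
        = (r2 * σ⁻¹ * r2⁻¹) * (w i * (d i)⁻¹ * x i) - r2⁻¹ * (x i * w i) := by
      intro i; ring
    rw [Finset.sum_congr rfl fun i _ => this i, Finset.sum_sub_distrib, ← Finset.mul_sum,
      ← Finset.mul_sum, ← hσd]
    have hxw : ∑ j, x j * w j = r2 := by rw [hr2d, dotProduct]
    rw [hxw]
    field_simp
    try ring
  have : M * D * M + P = F * G := hFG.symm
  rw [this, det_mul, hdetF, hdetG, mul_one]

lemma prod_erase_eq' (d : Fin n → ℝ) (hd : ∀ i, d i ≠ 0) (i : Fin n) :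
    ∏ j ∈ univ.erase i, d j = (∏ j, d j) / d i := by
  rw [eq_div_iff (hd i), mul_comm, Finset.mul_prod_erase univ d (mem_univ i)]

lemma sigma_prod (d x w : Fin n → ℝ) (hd : ∀ i, d i ≠ 0) :
    (∑ i, w i * (d i)⁻¹ * x i) * ∏ i, d i
      = ∑ i, x i * w i * ∏ j ∈ univ.erase i, d j := by
  rw [Finset.sum_mul]
  refine Finset.sum_congr rfl fun i _ => ?_
  rw [prod_erase_eq' d hd i]
  field_simp

lemma num_ne_zero (d x w : Fin n → ℝ) (hr2 : (∑ i, x i * w i) ≠ 0) :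
    (∑ i, C (x i * w i) * ∏ j ∈ univ.erase i, (X + C (d j)) : ℝ[X]) ≠ 0 := by
  intro h
  apply hr2
  have hc : (∑ i, C (x i * w i) * ∏ j ∈ univ.erase i, (X + C (d j)) : ℝ[X]).coeff (n - 1)
      = ∑ i, x i * w i := by
    rw [finset_sum_coeff]
    refine Finset.sum_congr rfl fun i _ => ?_
    rw [coeff_C_mul]
    have hm : (∏ j ∈ univ.erase i, (X + C (d j)) : ℝ[X]).Monic :=
      monic_prod_of_monic _ _ fun j _ => monic_X_add_C _
    have hdeg : (∏ j ∈ univ.erase i, (X + C (d j)) : ℝ[X]).natDegree = n - 1 := by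
      rw [natDegree_prod_of_monic _ _ fun j _ => monic_X_add_C _]
      simp [Finset.card_erase_of_mem]
    rw [← hdeg, hm.coeff_natDegree, mul_one]
  rw [h, coeff_zero] at hc
  exact hc.symm

lemma mapC_eval (t : ℝ) (A : Matrix (Fin n) (Fin n) ℝ) :
    (A.map (C : ℝ → ℝ[X])).map (evalRingHom t) = A := by
  ext i j
  simp [Matrix.map_apply]

lemma diagX_eval (t : ℝ) (d : Fin n → ℝ) :
    (diagonal (fun i => X + C (d i)) : Matrix (Fin n) (Fin n) ℝ[X]).map (evalRingHom t)
      = diagonal (fun i => t + d i) := by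
  rw [Matrix.diagonal_map (by simp)]
  congr 1
  funext i
  simp

lemma good_infinite (B : Set ℝ) (hB : B.Finite) : {t : ℝ | t ∉ B}.Infinite := by
  have := hB.infinite_compl
  simpa [Set.compl_def] using this

lemma L1 (d x w : Fin n → ℝ) (c : ℝ) :
    (diagonal d + c • vecMulVec x w).det
      = (∏ i, d i) + c * ∑ i, x i * w i * ∏ j ∈ univ.erase i, d j := by
  set A : Matrix (Fin n) (Fin n) ℝ := c • vecMulVec x w with hA
  set p : ℝ[X] := (diagonal (fun i => X + C (d i)) + A.map C).det with hp
  set q : ℝ[X] := (∏ i, (X + C (d i)))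
      + C c * ∑ i, C (x i * w i) * ∏ j ∈ univ.erase i, (X + C (d j)) with hq
  have hpe : ∀ t : ℝ, p.eval t = (diagonal (fun i => t + d i) + A).det := by
    intro t
    have h0 : p.eval t = (evalRingHom t) p := rfl
    rw [h0, hp, RingHom.map_det, RingHom.mapMatrix_apply, Matrix.map_add, diagX_eval,
      mapC_eval]
    exact fun a b => map_add _ a b
  have hqe : ∀ t : ℝ, q.eval t
      = (∏ i, (t + d i)) + c * ∑ i, x i * w i * ∏ j ∈ univ.erase i, (t + d j) := by
    intro t
    simp [hq, eval_prod, eval_finset_sum]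
  have hpq : p = q := by
    apply eq_of_infinite_eval_eq
    have hsub : {t : ℝ | t ∉ (Finset.image (fun i => -d i) univ : Finset ℝ)}
        ⊆ {t : ℝ | p.eval t = q.eval t} := by
      intro t ht
      have hd : ∀ i, t + d i ≠ 0 := by
        intro i h
        exact ht (by simp [Finset.mem_image]; exact ⟨i, by linarith⟩)
      have := L1gen (fun i => t + d i) x w c hd
      simp only [Set.mem_setOf_eq]
      rw [hpe t, hqe t, hA, this]
    exact Set.Infinite.mono hsub (good_infinite _ (Finset.finite_toSet _))
  have h0 := congrArg (eval 0) hpq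
  rw [hpe 0, hqe 0] at h0
  simpa using h0

lemma L2 (d x w : Fin n → ℝ) (hr2 : x ⬝ᵥ w ≠ 0) :
    ((1 - (x ⬝ᵥ w)⁻¹ • vecMulVec x w) * diagonal d * (1 - (x ⬝ᵥ w)⁻¹ • vecMulVec x w)
        + (x ⬝ᵥ w)⁻¹ • vecMulVec x w).det
      = (x ⬝ᵥ w)⁻¹ * ∑ i, x i * w i * ∏ j ∈ univ.erase i, d j := by
  have hxw : (∑ i, x i * w i) = x ⬝ᵥ w := rfl
  set Mr : Matrix (Fin n) (Fin n) ℝ := 1 - (x ⬝ᵥ w)⁻¹ • vecMulVec x w with hMr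
  set Pr : Matrix (Fin n) (Fin n) ℝ := (x ⬝ᵥ w)⁻¹ • vecMulVec x w with hPr
  set num : ℝ[X] := ∑ i, C (x i * w i) * ∏ j ∈ univ.erase i, (X + C (d j)) with hnum
  set p : ℝ[X] := ((Mr.map C) * diagonal (fun i => X + C (d i)) * (Mr.map C)
      + Pr.map C).det with hp
  set q : ℝ[X] := C ((x ⬝ᵥ w)⁻¹) * num with hq
  have hnume : ∀ t : ℝ, num.eval t
      = ∑ i, x i * w i * ∏ j ∈ univ.erase i, (t + d j) := by
    intro t
    simp [hnum, eval_finset_sum, eval_prod]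
  have hpe : ∀ t : ℝ, p.eval t = (Mr * diagonal (fun i => t + d i) * Mr + Pr).det := by
    intro t
    have h0 : p.eval t = (evalRingHom t) p := rfl
    rw [h0, hp, RingHom.map_det]
    rw [show ((evalRingHom t).mapMatrix) ((Mr.map C) * diagonal (fun i => X + C (d i))
          * (Mr.map C) + Pr.map C)
        = ((evalRingHom t).mapMatrix (Mr.map C)) * ((evalRingHom t).mapMatrix
            (diagonal (fun i => X + C (d i)))) * ((evalRingHom t).mapMatrix (Mr.map C))
          + (evalRingHom t).mapMatrix (Pr.map C) by rw [map_add, _root_.map_mul, _root_.map_mul]]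
    simp only [RingHom.mapMatrix_apply]
    rw [diagX_eval, mapC_eval, mapC_eval]
  have hqe : ∀ t : ℝ, q.eval t
      = (x ⬝ᵥ w)⁻¹ * ∑ i, x i * w i * ∏ j ∈ univ.erase i, (t + d j) := by
    intro t
    rw [hq, eval_mul, eval_C, hnume t]
  have hnum0 : num ≠ 0 := num_ne_zero d x w (by rw [hxw]; exact hr2)
  have hpq : p = q := by
    apply eq_of_infinite_eval_eq
    set bad : Set ℝ := ((Finset.image (fun i => -d i) univ : Finset ℝ) : Set ℝ)
        ∪ {t | num.IsRoot t} with hbad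
    have hbadfin : bad.Finite :=
      Set.Finite.union (Finset.finite_toSet _) (finite_setOf_isRoot hnum0)
    have hsub : {t : ℝ | t ∉ bad} ⊆ {t : ℝ | p.eval t = q.eval t} := by
      intro t ht
      simp only [hbad, Set.mem_union, Set.mem_setOf_eq, not_or] at ht
      have hd : ∀ i, t + d i ≠ 0 := by
        intro i h
        exact ht.1 (by simp [Finset.mem_image]; exact ⟨i, by linarith⟩)
      have hSne : (∑ i, x i * w i * ∏ j ∈ univ.erase i, (t + d j)) ≠ 0 := by
        rw [← hnume t]; exact ht.2
      have hσ : (∑ i, w i * (t + d i)⁻¹ * x i) ≠ 0 := by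
        intro h
        apply hSne
        rw [← sigma_prod (fun i => t + d i) x w hd, h, zero_mul]
      have hgen := L2gen (fun i => t + d i) x w hd hr2 hσ
      simp only [Set.mem_setOf_eq]
      rw [hpe t, hqe t, hMr, hPr, hgen, mul_assoc, sigma_prod (fun i => t + d i) x w hd]
    exact Set.Infinite.mono hsub (good_infinite _ hbadfin)
  have h0 := congrArg (eval 0) hpq
  rw [hpe 0, hqe 0] at h0
  simpa using h0

end helpers

/-- Determinant of a spherical concircular tensor: with `L = diag(λ) + r ⊗ r^♭` on `E^n_ν`
(metric `diag(ε)`), `R = 1 − r ⊗ r^♭ / r²` the projection onto `r^⊥`, and `L_E = R L R*`,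
one has `det(L_E + r ⊗ r^♭/r²) = r^{−2}(det L − det A)` and
`det(zR − L_E + r ⊗ r^♭/r²) = r^{−2}(B(z) − p_c(z))`, where `B(z) = det(zI − A)` and
`p_c(z) = det(zI − L)`. -/
theorem stmt_17 {n : ℕ} (lam ε x : Fin n → ℝ) (hε : ∀ i, ε i = 1 ∨ ε i = -1)
    (hr : (∑ i, ε i * (x i) ^ 2) ≠ 0) :
    let r2 : ℝ := ∑ i, ε i * (x i) ^ 2
    let w : Fin n → ℝ := fun i => ε i * x i
    let L : Matrix (Fin n) (Fin n) ℝ := Matrix.diagonal lam + Matrix.vecMulVec x w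
    let M : Matrix (Fin n) (Fin n) ℝ := 1 - r2⁻¹ • Matrix.vecMulVec x w
    (M * L * M + r2⁻¹ • Matrix.vecMulVec x w).det
        = r2⁻¹ * (L.det - (Matrix.diagonal lam).det)
    ∧ ∀ z : ℝ,
        (z • M - M * L * M + r2⁻¹ • Matrix.vecMulVec x w).det
          = r2⁻¹ * ((∏ i, (z - lam i))
              - (z • (1 : Matrix (Fin n) (Fin n) ℝ) - L).det) := by
  intro r2 w L M
  have hr2 : r2 ≠ 0 := hr
  have hxw : x ⬝ᵥ w = r2 := Finset.sum_congr rfl fun i _ => by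
    show x i * (ε i * x i) = ε i * x i ^ 2
    ring
  have hwx : w ⬝ᵥ x = r2 := by rw [dotProduct_comm]; exact hxw
  have hM : M = 1 - r2⁻¹ • vecMulVec x w := rfl
  have hL : L = diagonal lam + vecMulVec x w := rfl
  have hMV : M * vecMulVec x w = 0 := by
    rw [hM, sub_mul, one_mul, smul_mul_assoc, vmv_mul_vmv, hwx, smul_smul,
      inv_mul_cancel₀ hr2, one_smul, sub_self]
  have hMM : M * M = M := by
    nth_rewrite 2 [hM]
    rw [mul_sub, mul_one, mul_smul_comm, hMV, smul_zero, sub_zero]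
  have hMLM : M * L * M = M * diagonal lam * M := by
    rw [hL, mul_add, hMV, add_zero]
  have hLdet : L.det = (∏ i, lam i)
      + 1 * ∑ i, x i * w i * ∏ j ∈ univ.erase i, lam j := by
    rw [hL, show vecMulVec x w = (1 : ℝ) • vecMulVec x w from (one_smul ℝ _).symm]
    exact L1 lam x w 1
  have hL2 : ∀ d : Fin n → ℝ,
      ((1 - r2⁻¹ • vecMulVec x w) * diagonal d * (1 - r2⁻¹ • vecMulVec x w)
        + r2⁻¹ • vecMulVec x w).det
      = r2⁻¹ * ∑ i, x i * w i * ∏ j ∈ univ.erase i, d j := by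
    intro d
    have := L2 d x w (by rw [hxw]; exact hr2)
    rwa [hxw] at this
  constructor
  · rw [hMLM, hM, hL2 lam, hLdet, det_diagonal]
    ring
  · intro z
    have hdiagz : z • (1 : Matrix (Fin n) (Fin n) ℝ) - diagonal lam
        = diagonal (fun i => z - lam i) := by
      ext i j
      by_cases h : i = j <;>
        simp [h, diagonal_apply, Matrix.one_apply, Matrix.smul_apply, Matrix.sub_apply]
    have hML2 : M * diagonal (fun i => z - lam i) * M = z • M - M * L * M := by
      rw [← hdiagz, hMLM, mul_sub M (z • 1) (diagonal lam),
        mul_smul_comm z M (1 : Matrix (Fin n) (Fin n) ℝ), mul_one,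
        sub_mul (z • M) (M * diagonal lam) M, smul_mul_assoc z M M, hMM]
    have hzL : z • (1 : Matrix (Fin n) (Fin n) ℝ) - L
        = diagonal (fun i => z - lam i) + (-1 : ℝ) • vecMulVec x w := by
      rw [hL, sub_add_eq_sub_sub, hdiagz, sub_eq_add_neg, neg_one_smul]
    have hzdet : (z • (1 : Matrix (Fin n) (Fin n) ℝ) - L).det
        = (∏ i, (z - lam i))
          + (-1) * ∑ i, x i * w i * ∏ j ∈ univ.erase i, (z - lam j) := by
      rw [hzL]; exact L1 (fun i => z - lam i) x w (-1)
    rw [← hML2, hM, hL2 (fun i => z - lam i), hzdet]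
    ring
end
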